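/- arXiv:math/0401095 — 5 statements merged into one kernel-verified Lean document; each statement's English description precedes it below -/
import Mathlib

section
/- Let I be a nonempty set, {Mᵢ : i ∈ I} a family of nonempty L-structures, F a (proper) filter on I, and M = ∏_{i∈I} Mᵢ the product L-structure. For J ∈ F let M|_J = ∏_{j∈J} Mⱼ, and for J ⊆ K in F let π_{KJ} : M|_K → M|_J be the restriction homomorphism. For J ∈ F define ν_J : M|_J → M/F by ν_J(s) = (s ∗ t)/F, where t ∈ M is any fixed element and (s ∗ t)(i) = s(i) for i ∈ J and t(i) otherwise. Then: ν_J does not depend on the choice of t; each ν_J is an L-homomorphism; ν_J ∘ π_{KJ} = ν_K for J ⊆ K in F; and (M/F, (ν_J)_{J∈F}) is a colimit of the directed diagram (M|_J, π_{KJ}) indexed by (F, ⊇), i.e., for every family of L-homomorphisms μ_J : M|_J → N with μ_J ∘ π_{KJ} = μ_K there is a unique L-homomorphism h : M/F → N with h ∘ ν_J = μ_J for all J ∈ F. In particular, the reduced product ∏_{i∈I} Mᵢ/F is L-isomorphic to the directed colimit of the subproducts M|_J, J ∈ F. -/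
open FirstOrder Language Filter Structure

universe u v w

namespace ReducedProductColimit

variable {L : FirstOrder.Language.{u, v}}

/-- The componentwise `L`-structure on a product of `L`-structures. -/
instance piStructure {ι : Type*} (M : ι → Type*) [∀ i, L.Structure (M i)] :
    L.Structure (∀ i, M i) where
  funMap f x i := funMap f fun k => x k i
  RelMap r x := ∀ i, RelMap r fun k => x k i

variable {I : Type*} (M : I → Type*) [∀ i, L.Structure (M i)] (F : Filter I)

/-- The reduced-product prestructure on the product, relative to the filter `F`. -/
instance prestructure : L.Prestructure (F.productSetoid M) :=
  { F.productSetoid M with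
    toStructure :=
      { funMap := fun {_} f x a => funMap f fun i => x i a
        RelMap := fun {_} r x => ∀ᶠ a in F, RelMap r fun i => x i a }
    fun_equiv := fun {n} f x y xy => by
      refine mem_of_superset (iInter_mem.2 xy) fun a ha => ?_
      simp only [Set.mem_iInter, Set.mem_setOf_eq] at ha
      simp only [Set.mem_setOf_eq, ha]
    rel_equiv := fun {n} r x y xy => by
      rw [← iff_eq_eq]
      refine ⟨fun hx => ?_, fun hy => ?_⟩
      · refine mem_of_superset (inter_mem hx (iInter_mem.2 xy)) ?_
        rintro a ⟨ha1, ha2⟩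
        simp only [Set.mem_iInter, Set.mem_setOf_eq] at *
        rw [← funext ha2]
        exact ha1
      · refine mem_of_superset (inter_mem hy (iInter_mem.2 xy)) ?_
        rintro a ⟨ha1, ha2⟩
        simp only [Set.mem_iInter, Set.mem_setOf_eq] at *
        rw [funext ha2]
        exact ha1 }

/-- The reduced product `L`-structure on `F.Product M`. -/
instance productStructure : L.Structure (F.Product M) :=
  Language.quotientStructure

open Classical in
/-- `s ∗ t`: the element of the full product agreeing with `s` on `J` and with `t` off `J`. -/
noncomputable def star (J : Set I) (s : ∀ j : J, M j) (t : ∀ i, M i) : ∀ i, M i :=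
  fun i => if h : i ∈ J then s ⟨i, h⟩ else t i

/-- The restriction map `π_{KJ}` forgetting the coordinates outside of `J`. -/
def restrict {J K : Set I} (_ : J ⊆ K) (s : ∀ k : K, M k) : ∀ j : J, M j :=
  fun j => s ⟨j.1, ‹J ⊆ K› j.2⟩

end ReducedProductColimit

open ReducedProductColimit

namespace ReducedProductColimit

variable {L : FirstOrder.Language.{u, v}} {I : Type*} (M : I → Type*)
  [∀ i, L.Structure (M i)] (F : Filter I)

lemma funMap_coe {n : ℕ} (f : L.Functions n) (x : Fin n → ∀ i, M i) :
    (funMap f fun i => (x i : F.Product M)) = ((funMap f x : ∀ i, M i) : F.Product M) :=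
  funMap_quotient_mk' (F.productSetoid M) f x

lemma relMap_coe {n : ℕ} (r : L.Relations n) (x : Fin n → ∀ i, M i) :
    (RelMap r fun i => (x i : F.Product M)) ↔ ∀ᶠ a in F, RelMap r fun i => x i a :=
  relMap_quotient_mk' (F.productSetoid M) r x

lemma coe_eq_of_eventually {x y : ∀ i, M i} (h : ∀ᶠ i in F, x i = y i) :
    (x : F.Product M) = (y : F.Product M) :=
  Quotient.sound' h

lemma star_eq {J : Set I} (s : ∀ j : J, M j) (t : ∀ i, M i) {i : I} (hi : i ∈ J) :
    star M J s t i = s ⟨i, hi⟩ := dif_pos hi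

/-- `ν_J` as a homomorphism. -/
noncomputable def nu (J : Set I) (hJ : J ∈ F) (t : ∀ i, M i) :
    (∀ j : J, M j) →[L] F.Product M where
  toFun s := (star M J s t : F.Product M)
  map_fun' {n} f s := by
    show (star M J (funMap f s) t : F.Product M) = funMap f fun i => (star M J (s i) t : F.Product M)
    rw [funMap_coe]
    refine coe_eq_of_eventually M F (mem_of_superset hJ fun a ha => ?_)
    simp only [Set.mem_setOf_eq]
    rw [star_eq M _ _ ha]
    show funMap f (fun i => s i ⟨a, ha⟩) = funMap f fun i => star M J (s i) t a
    exact congrArg _ (funext fun i => (star_eq M _ _ ha).symm)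
  map_rel' {n} r s hr := by
    show RelMap r fun i => ((star M J (s i) t : F.Product M))
    rw [relMap_coe]
    refine mem_of_superset hJ fun a ha => ?_
    show RelMap r fun i => star M J (s i) t a
    have : (fun i => star M J (s i) t a) = fun i => s i ⟨a, ha⟩ :=
      funext fun i => star_eq M _ _ ha
    rw [this]
    exact hr ⟨a, ha⟩

end ReducedProductColimit


/-- For a nonempty family of nonempty `L`-structures `Mᵢ` and a proper filter `F` on `I`:
the restriction maps `π_{KJ}` are `L`-homomorphisms; the maps `ν_J : ∏_{j ∈ J} Mⱼ → (∏ᵢ Mᵢ)/F`,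
`ν_J(s) = (s ∗ t)/F`, are well defined (independent of `t`) `L`-homomorphisms compatible with the
restrictions; and `((∏ᵢ Mᵢ)/F, (ν_J)_{J ∈ F})` is a colimit of the directed diagram of the
subproducts `∏_{j ∈ J} Mⱼ` (`J ∈ F`): the reduced product is the directed colimit of the
subproducts. -/
theorem reducedProduct_is_colimit_of_subproducts {L : FirstOrder.Language.{u, v}}
    {I : Type w} [Nonempty I] (M : I → Type max u v w) [∀ i, L.Structure (M i)]
    [∀ i, Nonempty (M i)] (F : Filter I) [F.NeBot] :
    -- the restriction maps are `L`-homomorphisms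
    (∀ (J K : Set I) (hJK : J ⊆ K),
      ∃ h : (∀ k : K, M k) →[L] (∀ j : J, M j), ⇑h = restrict M hJK) ∧
    -- `ν_J` does not depend on the choice of `t`
    (∀ J : Set I, J ∈ F → ∀ (t t' : ∀ i, M i) (s : ∀ j : J, M j),
      (star M J s t : F.Product M) = (star M J s t' : F.Product M)) ∧
    -- each `ν_J` is an `L`-homomorphism
    (∀ J : Set I, J ∈ F → ∀ t : ∀ i, M i,
      ∃ h : (∀ j : J, M j) →[L] F.Product M,
        ⇑h = fun s : ∀ j : J, M j => (star M J s t : F.Product M)) ∧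
    -- `ν_J ∘ π_{KJ} = ν_K` for `J ⊆ K` in `F`
    (∀ J K : Set I, J ∈ F → K ∈ F → ∀ (hJK : J ⊆ K) (t : ∀ i, M i) (s : ∀ k : K, M k),
      (star M J (restrict M hJK s) t : F.Product M) = (star M K s t : F.Product M)) ∧
    -- the universal property of the colimit
    (∀ (N : Type max u v w) (_ : L.Structure N)
      (μ : ∀ J : Set I, J ∈ F → ((∀ j : J, M j) →[L] N)),
      (∀ (J K : Set I) (hJ : J ∈ F) (hK : K ∈ F) (hJK : J ⊆ K) (s : ∀ k : K, M k),
        μ J hJ (restrict M hJK s) = μ K hK s) →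
      ∃! h : (F.Product M) →[L] N,
        ∀ (J : Set I) (hJ : J ∈ F) (t : ∀ i, M i) (s : ∀ j : J, M j),
          h (star M J s t : F.Product M) = μ J hJ s) := by
  refine ⟨?_, ?_, ?_, ?_, ?_⟩
  · -- restrictions are homs
    intro J K hJK
    exact ⟨{ toFun := restrict M hJK
             map_fun' := fun {n} f x => rfl
             map_rel' := fun {n} r x hr j => hr ⟨j.1, hJK j.2⟩ }, rfl⟩
  · -- independence of t
    intro J hJ t t' s
    refine coe_eq_of_eventually M F (mem_of_superset hJ fun a ha => ?_)
    simp only [Set.mem_setOf_eq]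
    rw [star_eq M _ _ ha, star_eq M _ _ ha]
  · -- ν_J is a hom
    intro J hJ t
    exact ⟨nu M F J hJ t, rfl⟩
  · -- compatibility
    intro J K hJ hK hJK t s
    refine coe_eq_of_eventually M F (mem_of_superset hJ fun a ha => ?_)
    simp only [Set.mem_setOf_eq]
    rw [star_eq M _ _ ha, star_eq M _ _ (hJK ha)]
    rfl
  · -- universal property
    intro N _ μ hμ
    have key : ∀ (x y : ∀ i, M i), (∀ᶠ i in F, x i = y i) →
        μ Set.univ univ_mem (fun j => x j.1) = μ Set.univ univ_mem (fun j => y j.1) := by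
      intro x y hxy
      have hJ : {i | x i = y i} ∈ F := hxy
      have h1 := hμ {i | x i = y i} Set.univ hJ univ_mem (Set.subset_univ _)
        (fun j => x j.1)
      have h2 := hμ {i | x i = y i} Set.univ hJ univ_mem (Set.subset_univ _)
        (fun j => y j.1)
      rw [← h1, ← h2]
      exact congrArg _ (funext fun j => j.2)
    refine ⟨{ toFun := Quotient.lift (fun x : ∀ i, M i => μ Set.univ univ_mem fun j => x j.1)
                (fun x y hxy => key x y hxy)
              map_fun' := ?_
              map_rel' := ?_ }, ?_, ?_⟩
    · intro n f x
      induction x using Quotient.induction_on_pi with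
      | _ x =>
        show Quotient.lift _ _ (funMap f fun i => ((x i : F.Product M))) = _
        rw [funMap_coe]
        show μ Set.univ univ_mem (fun j => funMap f fun i => x i j.1) =
          funMap f fun i => μ Set.univ univ_mem fun j => x i j.1
        exact (μ Set.univ univ_mem).map_fun' f _
    · intro n r x hr
      induction x using Quotient.induction_on_pi with
      | _ x =>
        have hr' : ∀ᶠ a in F, RelMap r fun i => x i a := (relMap_coe M F r x).1 hr
        set J : Set I := {a | RelMap r fun i => x i a} with hJdef
        have hJ : J ∈ F := hr'
        have hrel : RelMap r fun i => fun j : J => x i j.1 := fun j => j.2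
        have := (μ J hJ).map_rel' r _ hrel
        have heq : ∀ i, μ J hJ (fun j : J => x i j.1) =
            μ Set.univ univ_mem (fun j => x i j.1) := fun i =>
          hμ J Set.univ hJ univ_mem (Set.subset_univ _) (fun j => x i j.1)
        show RelMap r fun i => μ Set.univ univ_mem fun j => x i j.1
        have : (fun i => μ Set.univ univ_mem fun j => x i j.1) =
            fun i => μ J hJ fun j : J => x i j.1 := funext fun i => (heq i).symm
        rw [this]
        exact (μ J hJ).map_rel' r _ hrel
    · intro J hJ t s
      show μ Set.univ univ_mem (fun j => star M J s t j.1) = μ J hJ s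
      rw [← hμ J Set.univ hJ univ_mem (Set.subset_univ _)]
      exact congrArg _ (funext fun j => star_eq M _ _ j.2)
    · intro h' hh'
      refine FirstOrder.Language.Hom.ext fun x => ?_
      induction x using Quotient.inductionOn with
      | _ x =>
        have hx : star M Set.univ (fun j => x j.1) x = x :=
          funext fun i => star_eq M _ _ (Set.mem_univ i)
        have := hh' Set.univ univ_mem x (fun j => x j.1)
        rw [hx] at this
        exact this
end

section
/- Let (I, ≤) be an upward directed poset, (Mᵢ, f_{ji}) a cofiltered diagram of finite L-structures over I, and U a directed ultrafilter on I. For J ∈ U and i ∈ I, let γ_{J,i} : ∏_{j∈J} Mⱼ → Mᵢ be the map sending x to the unique y ∈ Mᵢ with V_{J,i}(x, y) ∈ U. Then γ_{J,i} is an L-homomorphism from the product L-structure ∏_{j∈J} Mⱼ to Mᵢ. -/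
open FirstOrder Language

universe u v w

namespace CofilteredDiagram

variable {L : FirstOrder.Language.{u, v}} {I : Type w} [PartialOrder I]

/-- For a cofiltered diagram `(Mᵢ, f)` of `L`-structures over `I` (with transition maps
`f i j hij : M j →[L] M i` for `i ≤ j`), a subset `J ⊆ I`, an index `i`, a point
`x ∈ ∏_{j ∈ J} Mⱼ` and `y ∈ Mᵢ`, the set `V_{J,i}(x, y) = {j ∈ J ∩ ↑i : f_{ji}(x j) = y}`. -/
def V (M : I → Type*) [∀ i, L.Structure (M i)] (f : ∀ i j : I, i ≤ j → (M j →[L] M i))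
    (J : Set I) (i : I) (x : ∀ j : J, M j) (y : M i) : Set I :=
  {j : I | ∃ (hj : j ∈ J) (hij : i ≤ j), f i j hij (x ⟨j, hj⟩) = y}

end CofilteredDiagram

open CofilteredDiagram

namespace CofilteredDiagram

/-- The componentwise `L`-structure on a product of `L`-structures. -/
instance piStructure {L : FirstOrder.Language.{u, v}} {ι : Type*} (M : ι → Type*)
    [∀ i, L.Structure (M i)] : L.Structure (∀ i, M i) where
  funMap F x i := Structure.funMap F fun k => x k i
  RelMap R x := ∀ i, Structure.RelMap R fun k => x k i

end CofilteredDiagram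

/-- For a cofiltered diagram of finite `L`-structures over an upward directed poset `I` and a
directed ultrafilter `U` on `I`: for `J ∈ U` and `i ∈ I`, the map
`γ_{J,i} : ∏_{j ∈ J} Mⱼ → Mᵢ` sending `x` to the unique `y` with `V_{J,i}(x, y) ∈ U` is an
`L`-homomorphism from the product `L`-structure to `Mᵢ`. -/
theorem gamma_is_hom {L : FirstOrder.Language.{u, v}} {I : Type w}
    [PartialOrder I] [Nonempty I] (hdir : ∀ i j : I, ∃ k : I, i ≤ k ∧ j ≤ k)
    (M : I → Type*) [∀ i, L.Structure (M i)] [∀ i, Finite (M i)]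
    (f : ∀ i j : I, i ≤ j → (M j →[L] M i))
    (hfid : ∀ (i : I) (h : i ≤ i), f i i h = Hom.id L (M i))
    (hfcomp : ∀ (i j k : I) (hij : i ≤ j) (hjk : j ≤ k),
      (f i j hij).comp (f j k hjk) = f i k (le_trans hij hjk))
    (U : Ultrafilter I) (hU : ∀ i : I, {j : I | i ≤ j} ∈ U)
    (J : Set I) (hJ : J ∈ U) (i : I)
    (γ : (∀ j : J, M j) → M i)
    (hγ : ∀ (x : ∀ j : J, M j) (y : M i), γ x = y ↔ V M f J i x y ∈ U) :
    ∃ h : (∀ j : J, M j) →[L] M i, ⇑h = γ := by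
  classical
  refine ⟨⟨γ, ?_, ?_⟩, rfl⟩
  · intro n F x
    rw [hγ]
    have hmem : (⋂ k, V M f J i (x k) (γ (x k))) ∈ U :=
      (Filter.iInter_mem).2 fun k => (hγ (x k) (γ (x k))).1 rfl
    refine Filter.mem_of_superset (Filter.inter_mem hJ (Filter.inter_mem (hU i) hmem)) ?_
    rintro j ⟨hj, hij, hj2⟩
    simp only [Set.mem_iInter] at hj2
    have hij : i ≤ j := hij
    refine ⟨hj, hij, ?_⟩
    have hk : ∀ k, f i j hij (x k ⟨j, hj⟩) = γ (x k) := by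
      intro k
      obtain ⟨_, _, h⟩ := hj2 k
      exact h
    calc f i j hij ((Structure.funMap F x) ⟨j, hj⟩)
        = f i j hij (Structure.funMap F fun k => x k ⟨j, hj⟩) := rfl
      _ = Structure.funMap F fun k => f i j hij (x k ⟨j, hj⟩) := (f i j hij).map_fun F _
      _ = Structure.funMap F fun k => γ (x k) := by simp [hk]
  · intro n R x hx
    have hmem : (⋂ k, V M f J i (x k) (γ (x k))) ∈ U :=
      (Filter.iInter_mem).2 fun k => (hγ (x k) (γ (x k))).1 rfl
    obtain ⟨j, hj, hij, hj2⟩ :=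
      Ultrafilter.nonempty_of_mem (Filter.inter_mem hJ (Filter.inter_mem (hU i) hmem))
    simp only [Set.mem_iInter] at hj2
    have hij : i ≤ j := hij
    have hx' : Structure.RelMap R fun k => x k ⟨j, hj⟩ := hx ⟨j, hj⟩
    have h2 := (f i j hij).map_rel R _ hx'
    have heq : (⇑(f i j hij) ∘ fun k => x k ⟨j, hj⟩) = γ ∘ x := by
      funext k
      obtain ⟨_, _, h⟩ := hj2 k
      exact h
    rwa [heq] at h2
end

section
/- Let (I, ≤) be an upward directed poset, (Mᵢ, f_{ji}) a cofiltered diagram of finite L-structures over I, and U a directed ultrafilter on I, with γ_{I,i} : ∏_{j∈I} Mⱼ → Mᵢ sending x to the unique y with V_{I,i}(x, y) ∈ U. Then: (a) γ_{I,i} descends to the ultraproduct, i.e., if x, x′ ∈ ∏_{j∈I} Mⱼ satisfy {j ∈ I : x(j) = x′(j)} ∈ U then γ_{I,i}(x) = γ_{I,i}(x′), so there is an induced L-homomorphism γᵢ : (∏_{j∈I} Mⱼ)/U → Mᵢ with γᵢ(x/U) = γ_{I,i}(x); and (b) for all i ≤ k in I, f_{ki} ∘ γ_k = γᵢ. -/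
/-!
Everything follows from one fact: `γ i x` is the value that `f_{ji} (x j)` takes for `U`-almost
every `j`. Two such values coincide because `U` is proper, so `γ i` only depends on the germ of `x`
along `U`, commutes with the transition maps, and inherits the homomorphism property of the
`f_{ji}` by intersecting finitely many `U`-large sets.
-/

open FirstOrder Language

universe u v w

open CofilteredDiagram

open Filter

namespace CofilteredDiagram

variable {L : FirstOrder.Language.{u, v}} {I : Type w} [PartialOrder I] {M : I → Type*}
  [∀ i, L.Structure (M i)] {f : ∀ i j : I, i ≤ j → (M j →[L] M i)} {U : Ultrafilter I}
  {γ : ∀ i : I, (∀ j, M j) → M i}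

def IsEventualProjection (f : ∀ i j : I, i ≤ j → (M j →[L] M i)) (U : Ultrafilter I)
    (γ : ∀ i : I, (∀ j, M j) → M i) : Prop :=
  ∀ i x, ∀ᶠ j in (U : Filter I), ∃ hij : i ≤ j, f i j hij (x j) = γ i x

theorem mem_V_univ_iff {i j : I} {x : ∀ j, M j} {y : M i} :
    j ∈ V M f Set.univ i (fun j => x j.1) y ↔ ∃ hij : i ≤ j, f i j hij (x j) = y := by
  simp [V]

theorem isEventualProjection_of_mem_V
    (hγ : ∀ i x y, γ i x = y ↔ V M f Set.univ i (fun j => x j.1) y ∈ U) :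
    IsEventualProjection f U γ := fun i x =>
  mem_of_superset ((hγ i x _).1 rfl) fun _ => mem_V_univ_iff.1

namespace IsEventualProjection

theorem eq_of_eventually (hγ : IsEventualProjection f U γ) {i : I} {x : ∀ j, M j} {y : M i}
    (h : ∀ᶠ j in (U : Filter I), ∃ hij : i ≤ j, f i j hij (x j) = y) : γ i x = y :=
  eventually_const.1 <| ((hγ i x).and h).mono fun _ ⟨⟨_, hγx⟩, _, hy⟩ => hγx.symm.trans hy

theorem congr (hγ : IsEventualProjection f U γ) {i : I} {x x' : ∀ j, M j}
    (h : ∀ᶠ j in (U : Filter I), x j = x' j) : γ i x = γ i x' :=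
  hγ.eq_of_eventually <| ((hγ i x').and h).mono fun _ ⟨⟨hij, hx'⟩, hxx'⟩ => ⟨hij, hxx' ▸ hx'⟩

theorem map_apply (hfcomp : ∀ (i j k : I) (hij : i ≤ j) (hjk : j ≤ k),
      (f i j hij).comp (f j k hjk) = f i k (le_trans hij hjk))
    (hγ : IsEventualProjection f U γ) {i k : I} (hik : i ≤ k) (x : ∀ j, M j) :
    f i k hik (γ k x) = γ i x := by
  refine (hγ.eq_of_eventually <| (hγ k x).mono fun j ⟨hkj, hj⟩ => ?_).symm
  exact ⟨hik.trans hkj, by rw [← hj, ← hfcomp i k j hik hkj, Hom.comp_apply]⟩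

theorem funMap (hγ : IsEventualProjection f U γ) (i : I) {n : ℕ} (F : L.Functions n)
    (y : Fin n → ∀ j, M j) :
    γ i (fun j => Structure.funMap F fun a => y a j) = Structure.funMap F fun a => γ i (y a) := by
  have hy : ∀ᶠ j in (U : Filter I), ∀ a, ∃ hij : i ≤ j, f i j hij (y a j) = γ i (y a) :=
    eventually_all.2 fun a => hγ i (y a)
  refine hγ.eq_of_eventually <| ((hγ i fun j => Structure.funMap F fun a => y a j).and hy).mono
    fun j ⟨⟨hij, _⟩, hyj⟩ => ⟨hij, ?_⟩
  rw [(f i j hij).map_fun]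
  exact congrArg _ (funext fun a => (hyj a).2)

theorem relMap (hU : ∀ i : I, {j : I | i ≤ j} ∈ U) (hγ : IsEventualProjection f U γ) (i : I)
    {n : ℕ} (R : L.Relations n) (y : Fin n → ∀ j, M j)
    (h : ∀ᶠ j in (U : Filter I), Structure.RelMap R fun a => y a j) :
    Structure.RelMap R fun a => γ i (y a) := by
  -- `hU` supplies an index above `i` even when `n = 0`
  obtain ⟨j, hR, hij, hy⟩ :=
    (h.and (Eventually.and (hU i) (eventually_all.2 fun a => hγ i (y a)))).exists
  have hfy : (f i j hij ∘ fun a => y a j) = fun a => γ i (y a) := funext fun a => (hy a).2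
  exact hfy ▸ (f i j hij).map_rel R _ hR

def ultraproductHom (hU : ∀ i : I, {j : I | i ≤ j} ∈ U) (hγ : IsEventualProjection f U γ)
    (i : I) : (U : Filter I).Product M →[L] M i where
  toFun q := Quotient.liftOn' q (γ i) fun _ _ h => hγ.congr h
  map_fun' {n} F x := by
    induction x using Quotient.induction_on_pi with | _ y =>
    exact (congrArg (Quotient.liftOn' · (γ i) _) (Ultraproduct.funMap_cast F y)).trans
      (hγ.funMap i F y)
  map_rel' {n} R x := by
    induction x using Quotient.induction_on_pi with | _ y =>
    exact fun h => hγ.relMap hU i R y ((relMap_quotient_mk' _ R y).1 h)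

theorem ultraproductHom_coe (hU : ∀ i : I, {j : I | i ≤ j} ∈ U)
    (hγ : IsEventualProjection f U γ) (i : I) (x : ∀ j, M j) :
    hγ.ultraproductHom hU i x = γ i x :=
  rfl

end IsEventualProjection

end CofilteredDiagram

theorem gamma_descends_to_ultraproduct_general {L : FirstOrder.Language.{u, v}} {I : Type w}
    [PartialOrder I] (M : I → Type*) [∀ i, L.Structure (M i)]
    (f : ∀ i j : I, i ≤ j → (M j →[L] M i))
    (hfcomp : ∀ (i j k : I) (hij : i ≤ j) (hjk : j ≤ k),
      (f i j hij).comp (f j k hjk) = f i k (le_trans hij hjk))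
    (U : Ultrafilter I) (hU : ∀ i : I, {j : I | i ≤ j} ∈ U)
    (γ : ∀ i : I, (∀ j, M j) → M i)
    (hγ : ∀ (i : I) (x : ∀ j, M j) (y : M i),
      γ i x = y ↔ V M f Set.univ i (fun j => x j.1) y ∈ U) :
    -- (a) `γ_{I,i}` descends to the ultraproduct ...
    (∀ (i : I) (x x' : ∀ j, M j), {j : I | x j = x' j} ∈ U → γ i x = γ i x') ∧
    -- ... inducing an `L`-homomorphism `γᵢ` on the ultraproduct
    (∀ i : I, ∃ g : ((U : Filter I).Product M) →[L] M i,
      ∀ x : ∀ j, M j, g (x : (U : Filter I).Product M) = γ i x) ∧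
    -- (b) `f_{ki} ∘ γ_k = γᵢ` for `i ≤ k`
    (∀ (i k : I) (hik : i ≤ k) (x : ∀ j, M j), f i k hik (γ k x) = γ i x) := by
  have hγ' : IsEventualProjection f U γ := isEventualProjection_of_mem_V hγ
  exact ⟨fun _ _ _ h => hγ'.congr h,
    fun i => ⟨hγ'.ultraproductHom hU i, hγ'.ultraproductHom_coe hU i⟩,
    fun _ _ hik x => hγ'.map_apply hfcomp hik x⟩

/-- For a cofiltered diagram of finite `L`-structures over an upward directed poset `I` and a
directed ultrafilter `U` on `I`, with `γ_{I,i} : ∏_{j ∈ I} Mⱼ → Mᵢ` sending `x` to the unique `y`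
with `V_{I,i}(x, y) ∈ U`: (a) `γ_{I,i}` descends to the ultraproduct, inducing an
`L`-homomorphism `γᵢ : (∏ⱼ Mⱼ)/U → Mᵢ` with `γᵢ(x/U) = γ_{I,i}(x)`; and (b) for `i ≤ k`,
`f_{ki} ∘ γ_k = γᵢ`. -/
theorem gamma_descends_to_ultraproduct {L : FirstOrder.Language.{u, v}} {I : Type w}
    [PartialOrder I] [Nonempty I] (hdir : ∀ i j : I, ∃ k : I, i ≤ k ∧ j ≤ k)
    (M : I → Type*) [∀ i, L.Structure (M i)] [∀ i, Finite (M i)]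
    (f : ∀ i j : I, i ≤ j → (M j →[L] M i))
    (hfid : ∀ (i : I) (h : i ≤ i), f i i h = Hom.id L (M i))
    (hfcomp : ∀ (i j k : I) (hij : i ≤ j) (hjk : j ≤ k),
      (f i j hij).comp (f j k hjk) = f i k (le_trans hij hjk))
    (U : Ultrafilter I) (hU : ∀ i : I, {j : I | i ≤ j} ∈ U)
    (γ : ∀ i : I, (∀ j, M j) → M i)
    (hγ : ∀ (i : I) (x : ∀ j, M j) (y : M i),
      γ i x = y ↔ V M f Set.univ i (fun j => x j.1) y ∈ U) :
    -- (a) `γ_{I,i}` descends to the ultraproduct ...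
    (∀ (i : I) (x x' : ∀ j, M j), {j : I | x j = x' j} ∈ U → γ i x = γ i x') ∧
    -- ... inducing an `L`-homomorphism `γᵢ` on the ultraproduct
    (∀ i : I, ∃ g : ((U : Filter I).Product M) →[L] M i,
      ∀ x : ∀ j, M j, g (x : (U : Filter I).Product M) = γ i x) ∧
    -- (b) `f_{ki} ∘ γ_k = γᵢ` for `i ≤ k`
    (∀ (i k : I) (hik : i ≤ k) (x : ∀ j, M j), f i k hik (γ k x) = γ i x) :=
  gamma_descends_to_ultraproduct_general M f hfcomp U hU γ hγ
end

section
/- (Profinite structures are retracts of ultraproducts of finite structures.) Let (I, ≤) be an upward directed poset, (Mᵢ, f_{ji}) a cofiltered diagram of finite L-structures over I, and U a directed ultrafilter on I. Let P ⊆ ∏_{i∈I} Mᵢ be the thread substructure P = {x : f_{ji}(x(j)) = x(i) for all i ≤ j} (the cofiltered limit of the diagram), and let s : P → (∏_{i∈I} Mᵢ)/U be the L-homomorphism sending a thread x to its class x/U in the ultraproduct. Then s is an L-section: there exists an L-homomorphism r : (∏_{i∈I} Mᵢ)/U → P with r ∘ s = id_P. Hence P is a retract of the ultraproduct ∏_{i∈I}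 Mᵢ/U of the finite structures Mᵢ. -/
open FirstOrder Language

universe u v w

open CofilteredDiagram

namespace CofilteredDiagram

variable {I : Type w}

/-- The thread substructure `P = {x ∈ ∏ᵢ Mᵢ : f_{ji}(x j) = x i for all i ≤ j}`: the cofiltered
limit of the diagram, as an `L`-substructure of the product. -/
def threads {L : FirstOrder.Language.{u, v}} [PartialOrder I] (M : I → Type*)
    [∀ i, L.Structure (M i)] (f : ∀ i j : I, i ≤ j → (M j →[L] M i)) :
    L.Substructure (∀ i, M i) where
  carrier := {x | ∀ (i j : I) (hij : i ≤ j), f i j hij (x j) = x i}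
  fun_mem {n} F x hx := by
    intro i j hij
    show f i j hij (Structure.funMap F fun k => x k j) = Structure.funMap F fun k => x k i
    rw [(f i j hij).map_fun]
    congr 1
    funext k
    exact hx k i j hij

end CofilteredDiagram

open Filter

section Aux

variable {L : FirstOrder.Language.{u, v}} {I : Type w} [PartialOrder I]
variable {M : I → Type*} [∀ i, L.Structure (M i)] [∀ i, Finite (M i)]
variable (f : ∀ i j : I, i ≤ j → (M j →[L] M i)) (U : Ultrafilter I)

/-- The set of indices `j ≥ i` where the thread condition towards `y` holds. -/
def Aset (i : I) (x : ∀ a, M a) (y : M i) : Set I :=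
  {j | ∃ h : i ≤ j, f i j h (x j) = y}

theorem Aset_exists (hU : ∀ i : I, {j : I | i ≤ j} ∈ U) (i : I) (x : ∀ a, M a) :
    ∃ y : M i, Aset f i x y ∈ U := by
  have hsub : {j : I | i ≤ j} ⊆ ⋃ y : M i, Aset f i x y := fun j hj =>
    Set.mem_iUnion.2 ⟨f i j hj (x j), hj, rfl⟩
  have hmem : (⋃ y ∈ (Set.univ : Set (M i)), Aset f i x y) ∈ U := by
    simpa using Filter.mem_of_superset (hU i) hsub
  obtain ⟨y, -, hy⟩ := (Ultrafilter.finite_biUnion_mem_iff Set.finite_univ).1 hmem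
  exact ⟨y, hy⟩

omit [∀ i, Finite (M i)] in
theorem Aset_unique {i : I} {x : ∀ a, M a} {y y' : M i}
    (hy : Aset f i x y ∈ U) (hy' : Aset f i x y' ∈ U) : y = y' := by
  obtain ⟨j, ⟨h1, e1⟩, ⟨h2, e2⟩⟩ :=
    Filter.nonempty_of_mem (Filter.inter_mem (Ultrafilter.mem_coe.2 hy)
      (Ultrafilter.mem_coe.2 hy'))
  exact e1.symm.trans e2

end Aux

/-- **Profinite structures are retracts of ultraproducts of finite structures.**
Let `(Mᵢ, f)` be a cofiltered diagram of finite `L`-structures over an upward directed poset `I`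
and let `U` be a directed ultrafilter on `I`. Let `P` be the thread substructure of `∏ᵢ Mᵢ` (the
cofiltered limit of the diagram). Then the map `P → (∏ᵢ Mᵢ)/U` sending a thread to its class in
the ultraproduct is an `L`-homomorphism `s` admitting an `L`-homomorphism retraction `r` with
`r ∘ s = id`: `P` is a retract of the ultraproduct of the finite structures `Mᵢ`. -/
theorem profinite_retract_of_ultraproduct {L : FirstOrder.Language.{u, v}} {I : Type w}
    [PartialOrder I] [Nonempty I] (hdir : ∀ i j : I, ∃ k : I, i ≤ k ∧ j ≤ k)
    (M : I → Type*) [∀ i, L.Structure (M i)] [∀ i, Finite (M i)]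
    (f : ∀ i j : I, i ≤ j → (M j →[L] M i))
    (hfid : ∀ (i : I) (h : i ≤ i), f i i h = Hom.id L (M i))
    (hfcomp : ∀ (i j k : I) (hij : i ≤ j) (hjk : j ≤ k),
      (f i j hij).comp (f j k hjk) = f i k (le_trans hij hjk))
    (U : Ultrafilter I) (hU : ∀ i : I, {j : I | i ≤ j} ∈ U) :
    ∃ (s : CofilteredDiagram.threads M f →[L] (U : Filter I).Product M)
      (r : ((U : Filter I).Product M) →[L] CofilteredDiagram.threads M f),
      (∀ x : CofilteredDiagram.threads M f,
        s x = ((x : ∀ i, M i) : (U : Filter I).Product M)) ∧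
      ∀ x : CofilteredDiagram.threads M f, r (s x) = x := by
  classical
  choose g hg using fun (x : ∀ a, M a) (i : I) => Aset_exists f U hU i x
  have huniq : ∀ (i : I) (x : ∀ a, M a) (y : M i), Aset f i x y ∈ U → g x i = y :=
    fun i x y hy => Aset_unique f U (hg x i) hy
  -- g x is a thread
  have gthread : ∀ x : ∀ a, M a, g x ∈ CofilteredDiagram.threads M f := by
    intro x i i' h
    refine (huniq i x _ ?_).symm
    refine Filter.mem_of_superset (hg x i') ?_
    rintro j ⟨hj, e⟩
    refine ⟨le_trans h hj, ?_⟩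
    have hc := congrFun (congrArg DFunLike.coe (hfcomp i i' j h hj)) (x j)
    simp only [Hom.comp_apply] at hc
    rw [← hc, e]
  -- well-definedness on the ultraproduct
  have gwd : ∀ x y : ∀ a, M a, (∀ᶠ a in (U : Filter I), x a = y a) → g x = g y := by
    intro x y hxy
    funext i
    refine (huniq i y (g x i) ?_).symm
    refine Filter.mem_of_superset (Filter.inter_mem (Ultrafilter.mem_coe.2 (hg x i)) hxy) ?_
    rintro j ⟨⟨hj, e⟩, hxyj⟩
    exact ⟨hj, by rw [← hxyj]; exact e⟩
  -- the retraction as a function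
  let rfun : (U : Filter I).Product M → CofilteredDiagram.threads M f :=
    Quotient.lift (s := (U : Filter I).productSetoid M)
      (fun x => (⟨g x, gthread x⟩ : CofilteredDiagram.threads M f))
      (fun x y h => Subtype.ext (gwd x y h))
  -- the section
  refine ⟨⟨fun x => ((x : ∀ i, M i) : (U : Filter I).Product M), ?_, ?_⟩,
    ⟨rfun, ?_, ?_⟩, fun x => rfl, ?_⟩
  · -- s preserves functions
    intro n F x
    refine Eq.trans ?_ (Ultraproduct.funMap_cast F fun k => (x k : ∀ i, M i)).symm
    rfl
  · -- s preserves relations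
    intro n R x h
    have key := relMap_quotient_mk' ((U : Filter I).productSetoid M) R
      (fun k => (x k : ∀ i, M i))
    refine key.2 ?_
    exact Filter.Eventually.of_forall h
  · -- r preserves functions
    intro n F x
    have hrep := fun k => Quotient.exists_rep (x k)
    choose x' hx' using hrep
    have hfm : Structure.funMap F x =
        ((fun a => Structure.funMap F fun k => x' k a : ∀ a, M a) :
          (U : Filter I).Product M) := by
      rw [show x = fun k => ((x' k : ∀ a, M a) : (U : Filter I).Product M) from
        funext fun k => (hx' k).symm]
      exact Ultraproduct.funMap_cast F x'
    rw [hfm]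
    refine Subtype.ext ?_
    funext i
    show g (fun a => Structure.funMap F fun k => x' k a) i =
      Structure.funMap F fun k => (rfun (x k) : ∀ a, M a) i
    have hval : ∀ k, (rfun (x k) : ∀ a, M a) = g (x' k) := fun k => by
      rw [← hx' k]; rfl
    refine huniq i _ _ ?_
    have hmem : ({j : I | i ≤ j} ∩ ⋂ k, Aset f i (x' k) (g (x' k) i)) ∈ U :=
      Filter.inter_mem (hU i) (Filter.iInter_mem.2 fun k => hg (x' k) i)
    refine Filter.mem_of_superset hmem ?_
    rintro j ⟨hij, hj⟩
    simp only [Set.mem_iInter] at hj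
    refine ⟨hij, ?_⟩
    rw [(f i j hij).map_fun]
    congr 1
    funext k
    obtain ⟨h', e⟩ := hj k
    rw [hval k]
    exact e
  · -- r preserves relations
    intro n R x h
    have hrep := fun k => Quotient.exists_rep (x k)
    choose x' hx' using hrep
    have hval : ∀ k, (rfun (x k) : ∀ a, M a) = g (x' k) := fun k => by
      rw [← hx' k]; rfl
    have hev : ∀ᶠ a in (U : Filter I), Structure.RelMap R fun k => x' k a := by
      have key := relMap_quotient_mk' ((U : Filter I).productSetoid M) R x'
      refine key.1 ?_
      rw [show (fun k => (⟦x' k⟧ : (U : Filter I).Product M)) = x from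
        funext fun k => hx' k]
      exact h
    intro i
    have hmem : ({a : I | Structure.RelMap R fun k => x' k a} ∩
        ({j : I | i ≤ j} ∩ ⋂ k, Aset f i (x' k) (g (x' k) i))) ∈ (U : Filter I) :=
      Filter.inter_mem hev
        (Filter.inter_mem (hU i) (Filter.iInter_mem.2 fun k => hg (x' k) i))
    obtain ⟨j, hrel, hij, hj⟩ := Filter.nonempty_of_mem hmem
    simp only [Set.mem_iInter] at hj
    have this2 : Structure.RelMap R fun k => f i j hij (x' k j) :=
      (f i j hij).map_rel R (fun k => x' k j) hrel
    have heq : (fun k => f i j hij (x' k j)) =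
        fun k => (rfun (x k) : ∀ a, M a) i := by
      funext k
      obtain ⟨h', e⟩ := hj k
      rw [hval k]
      exact e
    show Structure.RelMap R fun k => (rfun (x k) : ∀ a, M a) i
    rwa [heq] at this2
  · -- r ∘ s = id
    intro x
    refine Subtype.ext ?_
    show g (x : ∀ i, M i) = (x : ∀ i, M i)
    funext i
    refine huniq i _ _ ?_
    refine Filter.mem_of_superset (hU i) fun j hj => ⟨hj, x.2 i j hj⟩
end

section
/- Let T be a set of L-sentences, each of the form ∀x̄ (ψ₀(x̄) → ψ₁(x̄)) where ψ₀(x̄) and ψ₁(x̄) are existential-positive L-formulas. Let (I, ≤) be an upward directed poset and (Mᵢ, f_{ji}) a cofiltered diagram of finite L-structures over I such that Mᵢ ⊨ T for every i ∈ I. Then the cofiltered limit P = {x ∈ ∏_{i∈I} Mᵢ : f_{ji}(x(j)) = x(i) for all i ≤ j}, with its induced L-structure, satisfies P ⊨ T. In other words, the elementary class Mod(T) is closed under the formation of profinite objects (cofiltered limits of its finite members). -/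
open FirstOrder Language

universe u v w

open CofilteredDiagram

namespace FirstOrder.Language.BoundedFormula

variable {L : FirstOrder.Language.{u, v}} {α : Type*}

/-- Existential-positive formulas: built from atomic formulas using `⊓`, `⊔` and `∃`. -/
inductive IsExistentialPositive : ∀ {n : ℕ}, L.BoundedFormula α n → Prop
  | equal {n : ℕ} (t₁ t₂ : L.Term (α ⊕ Fin n)) : IsExistentialPositive (t₁.bdEqual t₂)
  | rel {n k : ℕ} (R : L.Relations k) (ts : Fin k → L.Term (α ⊕ Fin n)) :
      IsExistentialPositive (R.boundedFormula ts)
  | inf {n : ℕ} {φ ψ : L.BoundedFormula α n} :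
      IsExistentialPositive φ → IsExistentialPositive ψ → IsExistentialPositive (φ ⊓ ψ)
  | sup {n : ℕ} {φ ψ : L.BoundedFormula α n} :
      IsExistentialPositive φ → IsExistentialPositive ψ → IsExistentialPositive (φ ⊔ ψ)
  | ex {n : ℕ} {φ : L.BoundedFormula α (n + 1)} :
      IsExistentialPositive φ → IsExistentialPositive φ.ex

end FirstOrder.Language.BoundedFormula

/-!
Existential-positive formulas are preserved by homomorphisms, so a hypothesis `ψ₀` true in `P`
is true in every `Mᵢ`, whence `ψ₁` holds in every `Mᵢ`. It remains to see that an
existential-positive formula true at every coordinate of a tuple of threads is true in `P`.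
Atomic formulas and `⊓` are coordinatewise. For `φ ⊔ ψ`, if `φ` fails at `i₀` then it fails at
every `k ≥ i₀`, so `ψ` holds cofinally and hence everywhere. For `∃`, the witnesses at the
coordinates form an inverse system of nonempty finite sets, which has a thread by König's lemma.
-/

open CategoryTheory BoundedFormula

variable {L : FirstOrder.Language.{u, v}}

theorem FirstOrder.Language.BoundedFormula.IsExistentialPositive.realize_hom {α : Type*}
    {A B : Type*} [L.Structure A] [L.Structure B] (g : A →[L] B) {n : ℕ}
    {φ : L.BoundedFormula α n} (hφ : φ.IsExistentialPositive) {v : α → A} {xs : Fin n → A}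
    (h : φ.Realize v xs) : φ.Realize (g ∘ v) (g ∘ xs) := by
  induction hφ with
  | equal t₁ t₂ =>
    rw [realize_bdEqual, ← Sum.comp_elim, HomClass.realize_term, HomClass.realize_term]
    exact congrArg g h
  | rel R ts =>
    simp only [realize_rel, ← Sum.comp_elim, HomClass.realize_term] at h ⊢
    exact g.map_rel R _ h
  | inf _ _ ih₁ ih₂ =>
    rw [realize_inf] at h ⊢
    exact ⟨ih₁ h.1, ih₂ h.2⟩
  | sup _ _ ih₁ ih₂ =>
    rw [realize_sup] at h ⊢
    exact h.imp ih₁ ih₂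
  | ex _ ih =>
    rw [realize_ex] at h ⊢
    obtain ⟨a, ha⟩ := h
    exact ⟨g a, by simpa only [Fin.comp_snoc] using ih ha⟩

namespace CofilteredDiagram

variable {I : Type w} [PartialOrder I] {M : I → Type*} [∀ i, L.Structure (M i)]
  {f : ∀ i j : I, i ≤ j → (M j →[L] M i)}

variable (f) in
def threadProj (i : I) : threads M f →[L] M i where
  toFun x := x.1 i
  map_fun' _ _ := rfl
  map_rel' _ _ h := h i

theorem threadProj_ext {x y : threads M f} (h : ∀ i, threadProj f i x = threadProj f i y) :
    x = y :=
  Subtype.ext (funext h)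

theorem comp_threadProj_comp {β : Type*} {i j : I} (hij : i ≤ j) (g : β → threads M f) :
    f i j hij ∘ (threadProj f j ∘ g) = threadProj f i ∘ g :=
  funext fun b => (g b).2 i j hij

theorem exists_mem_threads_forall_mem [IsDirectedOrder I] [∀ i, Finite (M i)]
    (hfid : ∀ (i : I) (h : i ≤ i), f i i h = Hom.id L (M i))
    (hfcomp : ∀ (i j k : I) (hij : i ≤ j) (hjk : j ≤ k),
      (f i j hij).comp (f j k hjk) = f i k (le_trans hij hjk))
    (S : ∀ i, Set (M i)) (hne : ∀ i, (S i).Nonempty)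
    (hmaps : ∀ i j (hij : i ≤ j), Set.MapsTo (f i j hij) (S j) (S i)) :
    ∃ x ∈ threads M f, ∀ i, x i ∈ S i := by
  let F : Iᵒᵖ ⥤ Type _ :=
    { obj i := S i.unop
      map g := TypeCat.ofHom ((hmaps _ _ (leOfHom g.unop)).restrict)
      map_id i := by
        ext y
        show f _ _ _ y.1 = y.1
        rw [hfid]
        rfl
      map_comp g₁ g₂ := by
        ext y
        show f _ _ _ y.1 = f _ _ _ (f _ _ _ y.1)
        rw [← hfcomp]
        rfl }
  have : ∀ i, Finite (F.obj i) := fun _ => Subtype.finite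
  have : ∀ i, Nonempty (F.obj i) := fun i => (hne i.unop).to_subtype
  obtain ⟨s, hs⟩ := nonempty_sections_of_finite_inverse_system F
  exact ⟨fun i => (s (.op i)).1, fun i j hij => congrArg Subtype.val (hs (homOfLE hij).op),
    fun i => (s (.op i)).2⟩

theorem realize_threadProj_of_le {α : Type*} {n : ℕ} {φ : L.BoundedFormula α n}
    (hφ : φ.IsExistentialPositive) {v : α → threads M f} {xs : Fin n → threads M f} {i j : I}
    (hij : i ≤ j) (h : φ.Realize (threadProj f j ∘ v) (threadProj f j ∘ xs)) :
    φ.Realize (threadProj f i ∘ v) (threadProj f i ∘ xs) := by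
  simpa only [comp_threadProj_comp] using hφ.realize_hom (f i j hij) h

theorem realize_of_forall_realize_threadProj [IsDirectedOrder I] [∀ i, Finite (M i)]
    (hfid : ∀ (i : I) (h : i ≤ i), f i i h = Hom.id L (M i))
    (hfcomp : ∀ (i j k : I) (hij : i ≤ j) (hjk : j ≤ k),
      (f i j hij).comp (f j k hjk) = f i k (le_trans hij hjk))
    {α : Type*} {n : ℕ} {φ : L.BoundedFormula α n} (hφ : φ.IsExistentialPositive)
    {v : α → threads M f} {xs : Fin n → threads M f}
    (h : ∀ i, φ.Realize (threadProj f i ∘ v) (threadProj f i ∘ xs)) : φ.Realize v xs := by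
  induction hφ with
  | equal t₁ t₂ =>
    refine threadProj_ext fun i => ?_
    simpa only [realize_bdEqual, ← Sum.comp_elim, HomClass.realize_term] using h i
  | rel R ts =>
    intro i
    have hi := h i
    simp only [realize_rel, ← Sum.comp_elim, HomClass.realize_term] at hi
    exact hi
  | inf _ _ ih₁ ih₂ =>
    simp only [realize_inf] at h ⊢
    exact ⟨ih₁ fun i => (h i).1, ih₂ fun i => (h i).2⟩
  | @sup _ φ ψ hφ hψ ih₁ ih₂ =>
    simp only [realize_sup] at h ⊢
    by_cases hall : ∀ i, φ.Realize (threadProj f i ∘ v) (threadProj f i ∘ xs)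
    · exact .inl (ih₁ hall)
    obtain ⟨i₀, hi₀⟩ := not_forall.1 hall
    refine .inr (ih₂ fun i => ?_)
    obtain ⟨k, hik, hi₀k⟩ := exists_ge_ge i i₀
    have hψk := (h k).resolve_left fun hφk => hi₀ (realize_threadProj_of_le hφ hi₀k hφk)
    exact realize_threadProj_of_le hψ hik hψk
  | @ex _ φ hφ ih =>
    simp only [realize_ex] at h ⊢
    let S i : Set (M i) := {y | φ.Realize (threadProj f i ∘ v) (Fin.snoc (threadProj f i ∘ xs) y)}
    have hmaps i j (hij : i ≤ j) : Set.MapsTo (f i j hij) (S j) (S i) := fun y hy => by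
      have hy' := hφ.realize_hom (f i j hij) hy
      simp only [Fin.comp_snoc, comp_threadProj_comp] at hy'
      exact hy'
    obtain ⟨x, hx, hxS⟩ := exists_mem_threads_forall_mem hfid hfcomp S h hmaps
    refine ⟨⟨x, hx⟩, ih fun i => ?_⟩
    rw [Fin.comp_snoc]
    exact hxS i

end CofilteredDiagram

theorem profinite_models_of_models_general {L : FirstOrder.Language.{u, v}} {I : Type w}
    [PartialOrder I] (hdir : ∀ i j : I, ∃ k : I, i ≤ k ∧ j ≤ k)
    (M : I → Type*) [∀ i, L.Structure (M i)] [∀ i, Finite (M i)]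
    (f : ∀ i j : I, i ≤ j → (M j →[L] M i))
    (hfid : ∀ (i : I) (h : i ≤ i), f i i h = Hom.id L (M i))
    (hfcomp : ∀ (i j k : I) (hij : i ≤ j) (hjk : j ≤ k),
      (f i j hij).comp (f j k hjk) = f i k (le_trans hij hjk))
    (T : Set L.Sentence)
    (hform : ∀ σ ∈ T, ∃ (n : ℕ) (ψ₀ ψ₁ : L.BoundedFormula Empty n),
      ψ₀.IsExistentialPositive ∧ ψ₁.IsExistentialPositive ∧ σ = (ψ₀.imp ψ₁).alls)
    (hM : ∀ i : I, ∀ σ ∈ T, σ.Realize (M i)) :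
    ∀ σ ∈ T, σ.Realize (CofilteredDiagram.threads M f) := by
  have : IsDirectedOrder I := ⟨hdir⟩
  intro σ hσ
  obtain ⟨n, ψ₀, ψ₁, h₀, h₁, rfl⟩ := hform σ hσ
  refine BoundedFormula.realize_alls.2 fun xs hψ₀ => ?_
  refine realize_of_forall_realize_threadProj hfid hfcomp h₁ fun i => ?_
  have hψ₀i := h₀.realize_hom (threadProj f i) hψ₀
  rw [Subsingleton.elim (threadProj f i ∘ default) default] at hψ₀i ⊢
  exact BoundedFormula.realize_alls.1 (hM i _ hσ) _ hψ₀i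

/-- Let `T` be a set of `L`-sentences of the form `∀ x̄ (ψ₀(x̄) → ψ₁(x̄))` with `ψ₀, ψ₁`
existential-positive. If `(Mᵢ, f)` is a cofiltered diagram of finite `L`-structures over an
upward directed poset `I` with `Mᵢ ⊨ T` for all `i`, then the cofiltered limit `P` (the thread
substructure of the product) satisfies `P ⊨ T`: the class `Mod(T)` is closed under the formation
of profinite objects. -/
theorem profinite_models_of_models {L : FirstOrder.Language.{u, v}} {I : Type w}
    [PartialOrder I] [Nonempty I] (hdir : ∀ i j : I, ∃ k : I, i ≤ k ∧ j ≤ k)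
    (M : I → Type*) [∀ i, L.Structure (M i)] [∀ i, Finite (M i)]
    (f : ∀ i j : I, i ≤ j → (M j →[L] M i))
    (hfid : ∀ (i : I) (h : i ≤ i), f i i h = Hom.id L (M i))
    (hfcomp : ∀ (i j k : I) (hij : i ≤ j) (hjk : j ≤ k),
      (f i j hij).comp (f j k hjk) = f i k (le_trans hij hjk))
    (T : Set L.Sentence)
    (hform : ∀ σ ∈ T, ∃ (n : ℕ) (ψ₀ ψ₁ : L.BoundedFormula Empty n),
      ψ₀.IsExistentialPositive ∧ ψ₁.IsExistentialPositive ∧ σ = (ψ₀.imp ψ₁).alls)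
    (hM : ∀ i : I, ∀ σ ∈ T, σ.Realize (M i)) :
    ∀ σ ∈ T, σ.Realize (CofilteredDiagram.threads M f) :=
  profinite_models_of_models_general hdir M f hfid hfcomp T hform hM
end
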